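/- arXiv:1605.00072 — 4 statements merged into one kernel-verified Lean document; each statement's English description precedes it below -/
import Mathlib

section
/- Let F be an arithmetic function for which there exist s ∈ ℤ_{≥0}, real numbers κ ∈ [0,1), β ≥ 0 and complex numbers a_0,…,a_s with a_s ≠ 0 such that for all z ≥ 1, ∑_{n ≤ z} (F ⋆ μ)(n) = z·∑_{j=0}^{s} a_j (log z)^j + O(z^κ (log ez)^β). Set f = F ⋆ μ. Then for any real numbers 1 ≤ t ≤ z, ∑_{z < n ≤ z+t} f(n) = t·a_s (log z)^s + O( t (log ez)^{s−1} + z^κ (log ez)^β ). -/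
/-!
Write the short sum as the difference of the long sums up to `z + t` and up to `z`. Since
`z + t ≤ 2z`, both remainders are `O(z^κ (log ez)^β)`. With `P(L) = ∑ aⱼ Lʲ`, the main terms
differ by `(z + t) P(log (z + t)) - z P(log z) = (z + t) (P(log (z + t)) - P(log z)) + t P(log z)`.
As `0 ≤ log (z + t) - log z ≤ t / z` and `|P'| = O((log ez)^(s-1))` on `[0, log ez]`, the first
summand is `O(t (log ez)^(s-1))`, and so is `t P(log z) - t aₛ (log z)^s`.
-/

open Finset

/-- Dirichlet convolution of two arithmetic functions (valued in `ℂ`). -/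
noncomputable def dconv (f g : ℕ → ℂ) (n : ℕ) : ℂ :=
  ∑ d ∈ n.divisors, f d * g (n / d)

/-- The Möbius function, viewed as a complex-valued arithmetic function. -/
noncomputable def muC : ℕ → ℂ := fun n => (ArithmeticFunction.moebius n : ℂ)

open Real

noncomputable def polyEval {s : ℕ} (a : Fin (s + 1) → ℂ) (x : ℝ) : ℂ :=
  ∑ j : Fin (s + 1), a j * (x : ℂ) ^ (j : ℕ)

theorem sum_Ioc_eq_sum_Icc_sub_sum_Icc {M : Type*} [AddCommGroup M] (f : ℕ → M) {m n : ℕ}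
    (hmn : m ≤ n) : ∑ k ∈ Ioc m n, f k = ∑ k ∈ Icc 1 n, f k - ∑ k ∈ Icc 1 m, f k := by
  rw [← Nat.zero_add 1, Icc_add_one_left_eq_Ioc, Icc_add_one_left_eq_Ioc, eq_sub_iff_add_eq,
    add_comm]
  exact sum_Ioc_consecutive f (Nat.zero_le m) hmn

section PowerBounds

variable {Λ : ℝ} {s : ℕ}

theorem pow_le_rpow_natCast_sub_one (hΛ : 1 ≤ Λ) {j : ℕ} (hjs : j < s) : Λ ^ j ≤ Λ ^ ((s : ℝ) - 1) := by
  rw [← rpow_natCast]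
  have : (j : ℝ) + 1 ≤ s := by exact_mod_cast hjs
  exact rpow_le_rpow_of_exponent_le hΛ (by linarith)

theorem natCast_mul_pow_pred_le (hΛ : 1 ≤ Λ) {j : ℕ} (hjs : j ≤ s) :
    j * Λ ^ (j - 1) ≤ s * Λ ^ ((s : ℝ) - 1) := by
  rcases j with _ | j
  · simp only [CharP.cast_eq_zero, zero_mul]
    positivity
  · exact mul_le_mul (by exact_mod_cast hjs) (pow_le_rpow_natCast_sub_one hΛ (by omega))
      (by positivity) (by positivity)

theorem abs_pow_sub_pow_le_of_abs_le (hΛ : 1 ≤ Λ) {x y : ℝ} (hx : |x| ≤ Λ) (hy : |y| ≤ Λ) {j : ℕ}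
    (hjs : j ≤ s) : |x ^ j - y ^ j| ≤ s * Λ ^ ((s : ℝ) - 1) * |x - y| := by
  calc |x ^ j - y ^ j| ≤ |x - y| * j * max |x| |y| ^ (j - 1) := abs_pow_sub_pow_le _ _ _
    _ ≤ |x - y| * (j * Λ ^ (j - 1)) := by
        rw [mul_assoc]
        gcongr
        exact max_le hx hy
    _ ≤ |x - y| * (s * Λ ^ ((s : ℝ) - 1)) :=
        mul_le_mul_of_nonneg_left (natCast_mul_pow_pred_le hΛ hjs) (abs_nonneg _)
    _ = s * Λ ^ ((s : ℝ) - 1) * |x - y| := mul_comm _ _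

variable (a : Fin (s + 1) → ℂ)

theorem norm_polyEval_sub_le (hΛ : 1 ≤ Λ) {x y : ℝ} (hx : |x| ≤ Λ) (hy : |y| ≤ Λ) :
    ‖polyEval a x - polyEval a y‖ ≤ (∑ j, ‖a j‖) * (s * Λ ^ ((s : ℝ) - 1) * |x - y|) := by
  rw [polyEval, polyEval, ← sum_sub_distrib, sum_mul]
  refine (norm_sum_le _ _).trans (sum_le_sum fun j _ => ?_)
  rw [← mul_sub, norm_mul, ← Complex.ofReal_pow, ← Complex.ofReal_pow, ← Complex.ofReal_sub,
    Complex.norm_real, Real.norm_eq_abs]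
  gcongr
  exact abs_pow_sub_pow_le_of_abs_le hΛ hx hy j.is_le

theorem norm_polyEval_sub_leading_le (hΛ : 1 ≤ Λ) {x : ℝ} (hx : |x| ≤ Λ) :
    ‖polyEval a x - a (Fin.last s) * (x : ℂ) ^ s‖ ≤ (∑ j, ‖a j‖) * Λ ^ ((s : ℝ) - 1) := by
  rw [polyEval, Fin.sum_univ_castSucc, Fin.val_last, add_sub_cancel_right, sum_mul,
    Fin.sum_univ_castSucc (fun j => ‖a j‖ * _)]
  refine (norm_sum_le _ _).trans (le_add_of_le_of_nonneg (sum_le_sum fun j _ => ?_)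
    (by positivity))
  rw [norm_mul, norm_pow, Complex.norm_real, Real.norm_eq_abs, Fin.val_castSucc]
  gcongr
  exact (pow_le_pow_left₀ (abs_nonneg x) hx j).trans (pow_le_rpow_natCast_sub_one hΛ j.isLt)

end PowerBounds

section Logarithms

variable {z t : ℝ}

theorem log_exp_one_mul (hz : 0 < z) : log (exp 1 * z) = 1 + log z := by
  rw [log_mul (exp_ne_zero 1) hz.ne', log_exp]

theorem one_le_log_exp_one_mul (hz : 1 ≤ z) : 1 ≤ log (exp 1 * z) := by
  rw [log_exp_one_mul (by linarith)]
  linarith [log_nonneg hz]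

theorem log_add_sub_log_le (hz : 0 < z) (ht : 0 ≤ t) : log (z + t) - log z ≤ t / z := by
  rw [← log_div (by linarith) hz.ne']
  calc log ((z + t) / z) ≤ (z + t) / z - 1 := log_le_sub_one_of_pos (by positivity)
    _ = t / z := by field_simp; ring

theorem log_add_le_log_exp_one_mul (hz : 0 < z) (ht : 0 ≤ t) (htz : t ≤ z) :
    log (z + t) ≤ log (exp 1 * z) :=
  log_le_log (by linarith) (by nlinarith [exp_one_gt_d9])

theorem log_exp_one_mul_add_le (hz : 1 ≤ z) (ht : 0 ≤ t) (htz : t ≤ z) :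
    log (exp 1 * (z + t)) ≤ 2 * log (exp 1 * z) := by
  have h := log_add_le_log_exp_one_mul (by linarith) ht htz
  rw [log_exp_one_mul (by linarith)] at h ⊢
  rw [log_exp_one_mul (by linarith)]
  linarith [log_nonneg hz]

theorem add_rpow_mul_log_rpow_le {κ β : ℝ} (hκ : 0 ≤ κ) (hβ : 0 ≤ β) (hz : 1 ≤ z) (ht : 0 ≤ t)
    (htz : t ≤ z) :
    (z + t) ^ κ * log (exp 1 * (z + t)) ^ β ≤
      2 ^ κ * 2 ^ β * (z ^ κ * log (exp 1 * z) ^ β) := by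
  have hΛ : 0 ≤ log (exp 1 * z) := zero_le_one.trans (one_le_log_exp_one_mul hz)
  have hΛ_add : 0 ≤ log (exp 1 * (z + t)) :=
    zero_le_one.trans (one_le_log_exp_one_mul (by linarith))
  have hz_add : (z + t) ^ κ ≤ 2 ^ κ * z ^ κ := by
    rw [← mul_rpow zero_le_two (by linarith)]
    exact rpow_le_rpow (by linarith) (by linarith) hκ
  have hlog_add : log (exp 1 * (z + t)) ^ β ≤ 2 ^ β * log (exp 1 * z) ^ β := by
    rw [← mul_rpow zero_le_two hΛ]
    exact rpow_le_rpow hΛ_add (log_exp_one_mul_add_le hz ht htz) hβ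
  calc (z + t) ^ κ * log (exp 1 * (z + t)) ^ β ≤ 2 ^ κ * z ^ κ * (2 ^ β * log (exp 1 * z) ^ β) :=
        mul_le_mul hz_add hlog_add (rpow_nonneg hΛ_add β) (by positivity)
    _ = 2 ^ κ * 2 ^ β * (z ^ κ * log (exp 1 * z) ^ β) := by ring

end Logarithms

theorem norm_add_mul_polyEval_sub_le {s : ℕ} (a : Fin (s + 1) → ℂ) {z t : ℝ} (hz : 1 ≤ z)
    (ht : 0 ≤ t) (htz : t ≤ z) :
    ‖((z + t : ℝ) : ℂ) * polyEval a (log (z + t)) - (z : ℂ) * polyEval a (log z) -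
        (t : ℂ) * a (Fin.last s) * (log z : ℂ) ^ s‖ ≤
      (∑ j, ‖a j‖) * (2 * s + 1) * (t * log (exp 1 * z) ^ ((s : ℝ) - 1)) := by
  set Λ := log (exp 1 * z)
  set A := ∑ j, ‖a j‖
  have hz0 : 0 < z := by linarith
  have hΛ_eq : Λ = 1 + log z := log_exp_one_mul hz0
  have hL : |log z| ≤ Λ := by
    rw [abs_of_nonneg (log_nonneg hz)]
    linarith
  have hL' : |log (z + t)| ≤ Λ := by
    rw [abs_of_nonneg (log_nonneg (by linarith))]
    exact log_add_le_log_exp_one_mul hz0 ht htz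
  have hΛ : 1 ≤ Λ := one_le_log_exp_one_mul hz
  have hdiff : |log (z + t) - log z| ≤ t / z := by
    rw [abs_of_nonneg (sub_nonneg.mpr (log_le_log hz0 (by linarith)))]
    exact log_add_sub_log_le hz0 ht
  have hshift : ‖polyEval a (log (z + t)) - polyEval a (log z)‖ ≤
      A * (s * Λ ^ ((s : ℝ) - 1) * (t / z)) := by
    refine (norm_polyEval_sub_le a hΛ hL' hL).trans ?_
    gcongr
  have hlead := norm_polyEval_sub_leading_le a hΛ hL
  have hzt : (z + t) * (t / z) ≤ 2 * t := by
    rw [mul_div_assoc', div_le_iff₀ hz0]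
    nlinarith
  calc _ = ‖((z + t : ℝ) : ℂ) * (polyEval a (log (z + t)) - polyEval a (log z)) +
          (t : ℂ) * (polyEval a (log z) - a (Fin.last s) * (log z : ℂ) ^ s)‖ := by
        push_cast
        ring_nf
    _ ≤ (z + t) * (A * (s * Λ ^ ((s : ℝ) - 1) * (t / z))) + t * (A * Λ ^ ((s : ℝ) - 1)) := by
        refine (norm_add_le _ _).trans ?_
        rw [norm_mul, norm_mul, Complex.norm_real, Complex.norm_real, Real.norm_of_nonneg ht,
          Real.norm_of_nonneg (by linarith)]
        gcongr
    _ = A * s * Λ ^ ((s : ℝ) - 1) * ((z + t) * (t / z)) + A * Λ ^ ((s : ℝ) - 1) * t := by ring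
    _ ≤ A * s * Λ ^ ((s : ℝ) - 1) * (2 * t) + A * Λ ^ ((s : ℝ) - 1) * t := by gcongr
    _ = A * (2 * s + 1) * (t * Λ ^ ((s : ℝ) - 1)) := by ring

theorem stmt1_general (s : ℕ) (κ β : ℝ) (hκ : 0 ≤ κ) (hβ : 0 ≤ β)
    (a : Fin (s + 1) → ℂ)
    (F : ℕ → ℂ) (C₀ : ℝ)
    (h1 : ∀ z : ℝ, 1 ≤ z →
      ‖(∑ n ∈ Finset.Icc 1 ⌊z⌋₊, dconv F muC n) -
          (z : ℂ) * ∑ j : Fin (s + 1), a j * (Real.log z : ℂ) ^ (j : ℕ)‖ ≤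
        C₀ * z ^ κ * Real.log (Real.exp 1 * z) ^ β) :
    ∃ C > 0, ∀ t z : ℝ, 1 ≤ t → t ≤ z →
      ‖(∑ n ∈ Finset.Ioc ⌊z⌋₊ ⌊z + t⌋₊, dconv F muC n) -
          (t : ℂ) * a (Fin.last s) * (Real.log z : ℂ) ^ s‖ ≤
        C * (t * Real.log (Real.exp 1 * z) ^ ((s : ℝ) - 1) +
          z ^ κ * Real.log (Real.exp 1 * z) ^ β) := by
  set S : ℝ → ℂ := fun x => ∑ n ∈ Icc 1 ⌊x⌋₊, dconv F muC n
  set A := ∑ j, ‖a j‖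
  have hC₀ : 0 ≤ C₀ := by simpa using (norm_nonneg _).trans (h1 1 le_rfl)
  refine ⟨A * (2 * s + 1) + C₀ * (2 ^ κ * 2 ^ β + 1) + 1, by positivity, fun t z ht htz => ?_⟩
  have hz : 1 ≤ z := ht.trans htz
  set Λ := log (exp 1 * z)
  have hΛ : 0 ≤ Λ := zero_le_one.trans (one_le_log_exp_one_mul hz)
  have hX : 0 ≤ z ^ κ * Λ ^ β := mul_nonneg (rpow_nonneg (by linarith) κ) (rpow_nonneg hΛ β)
  have hY : 0 ≤ t * Λ ^ ((s : ℝ) - 1) := mul_nonneg (by linarith) (rpow_nonneg hΛ _)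
  have hE_add : ‖S (z + t) - ((z + t : ℝ) : ℂ) * polyEval a (log (z + t))‖ ≤
      C₀ * (2 ^ κ * 2 ^ β * (z ^ κ * Λ ^ β)) := by
    refine (h1 (z + t) (by linarith)).trans ?_
    rw [mul_assoc]
    exact mul_le_mul_of_nonneg_left (add_rpow_mul_log_rpow_le hκ hβ hz (by linarith) htz) hC₀
  rw [sum_Ioc_eq_sum_Icc_sub_sum_Icc _ (Nat.floor_le_floor (by linarith : z ≤ z + t))]
  calc ‖S (z + t) - S z - t * a (Fin.last s) * (log z : ℂ) ^ s‖
      = ‖(S (z + t) - ((z + t : ℝ) : ℂ) * polyEval a (log (z + t))) -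
          (S z - z * polyEval a (log z)) +
          (((z + t : ℝ) : ℂ) * polyEval a (log (z + t)) - z * polyEval a (log z) -
            t * a (Fin.last s) * (log z : ℂ) ^ s)‖ := by
        congr 1
        ring
    _ ≤ C₀ * (2 ^ κ * 2 ^ β * (z ^ κ * Λ ^ β)) + C₀ * z ^ κ * Λ ^ β +
          A * (2 * s + 1) * (t * Λ ^ ((s : ℝ) - 1)) :=
        (norm_add_le _ _).trans (add_le_add ((norm_sub_le _ _).trans
          (add_le_add hE_add (h1 z hz))) (norm_add_mul_polyEval_sub_le a hz (by linarith) htz))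
    _ ≤ _ := by
        have hA : 0 ≤ A * (2 * s + 1) := by positivity
        have hC : 0 ≤ C₀ * (2 ^ κ * 2 ^ β + 1) := by positivity
        linarith [mul_nonneg hA hX, mul_nonneg hC hY]

theorem stmt1 (s : ℕ) (κ β : ℝ) (hκ : 0 ≤ κ) (hκ' : κ < 1) (hβ : 0 ≤ β)
    (a : Fin (s + 1) → ℂ) (has : a (Fin.last s) ≠ 0)
    (F : ℕ → ℂ) (C₀ : ℝ)
    (h1 : ∀ z : ℝ, 1 ≤ z →
      ‖(∑ n ∈ Finset.Icc 1 ⌊z⌋₊, dconv F muC n) -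
          (z : ℂ) * ∑ j : Fin (s + 1), a j * (Real.log z : ℂ) ^ (j : ℕ)‖ ≤
        C₀ * z ^ κ * Real.log (Real.exp 1 * z) ^ β) :
    ∃ C > 0, ∀ t z : ℝ, 1 ≤ t → t ≤ z →
      ‖(∑ n ∈ Finset.Ioc ⌊z⌋₊ ⌊z + t⌋₊, dconv F muC n) -
          (t : ℂ) * a (Fin.last s) * (Real.log z : ℂ) ^ s‖ ≤
        C * (t * Real.log (Real.exp 1 * z) ^ ((s : ℝ) - 1) +
          z ^ κ * Real.log (Real.exp 1 * z) ^ β) :=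
  stmt1_general s κ β hκ hβ a F C₀ h1
end

section
/- Let F be any arithmetic function, f = F ⋆ μ its Eratosthenes transform, and let e^e < y ≤ x be real numbers. Define Σ_F(N,x,y) := ∑_{N < n ≤ 2N} f(n)·(ψ((x+y)/n) − ψ(x/n)) for y < N ≤ x. Then for any integers N ∈ (y, x] and H ≥ 1, Σ_F(N,x,y) = −∫_x^{x+y} ∑_{0 < |h| ≤ H} ∑_{N < n ≤ 2N} (f(n)/n)·e(h t / n) dt + O( max_{x ≤ z ≤ x+y} ∑_{N < n ≤ 2N} |f(n)| · min(1, 1/(H·‖z/n‖)) ). -/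
open Finset

/-- The first Bernoulli function `ψ(t) = t − ⌊t⌋ − 1/2`. -/
noncomputable def psiB (t : ℝ) : ℝ := t - ⌊t⌋ - 1 / 2

/-- The additive character `e(t) = e^{2πit}`. -/
noncomputable def eC (t : ℝ) : ℂ := Complex.exp (2 * Real.pi * Complex.I * t)

/-- `‖t‖`, the distance from `t` to its nearest integer. -/
noncomputable def nearInt (t : ℝ) : ℝ := |t - round t|

/-- `min(1, 1/(H·‖t‖))`, interpreted as `1` when `‖t‖ = 0`. -/
noncomputable def kernel (H : ℕ) (t : ℝ) : ℝ :=
  if nearInt t = 0 then 1 else min 1 (1 / (H * nearInt t))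

/-!
The partial sums `psiPartial H u = -∑_{h ≤ H} sin(2πhu)/(πh)` of the Fourier series of `ψ`
satisfy `|ψ(u) - psiPartial H u| ≤ 3 min(1, 1/(H‖u‖))`. By periodicity and oddness it suffices
to take `0 < u ≤ 1/2`; there the error is `-∫_u^{1/2}` of the Dirichlet kernel
`sin((2H+1)πt) / sin(πt)`, and integrating by parts against the decreasing weight `1/sin(πt)`
bounds it by `1/((2H+1)πu)`.

The exponential sum integrates exactly: `∑_{0<|h|≤H} e(hu) = 2∑_{h≤H} cos(2πhu)` is the
derivative of `-psiPartial H`, so minus the integral equals `∑ f(n) (psiPartial H ((x+y)/n) -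
psiPartial H (x/n))`. The quantity to bound is thus `∑ f(n)` times a difference of two
approximation errors, controlled by the kernel at `z = x + y` and at `z = x`.
-/

open Real MeasureTheory

noncomputable def psiPartial (H : ℕ) (u : ℝ) : ℝ :=
  -∑ h ∈ Icc 1 H, sin (2 * π * h * u) / (π * h)

noncomputable def cosSum (H : ℕ) (t : ℝ) : ℝ :=
  ∑ h ∈ Icc 1 H, 2 * cos (2 * π * h * t)

lemma psiB_eq_fract (u : ℝ) : psiB u = Int.fract u - 1 / 2 := by
  rw [psiB, Int.fract]

lemma psiB_add_intCast (u : ℝ) (k : ℤ) : psiB (u + k) = psiB u := by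
  rw [psiB_eq_fract, psiB_eq_fract, Int.fract_add_intCast]

lemma psiB_neg {u : ℝ} (hu : Int.fract u ≠ 0) : psiB (-u) = -psiB u := by
  rw [psiB_eq_fract, psiB_eq_fract, Int.fract_neg hu]
  ring

lemma hasDerivAt_psiB {t : ℝ} (h0 : 0 < t) (h1 : t < 1) : HasDerivAt psiB 1 t := by
  refine ((hasDerivAt_id t).sub_const (1 / 2 : ℝ)).congr_of_eventuallyEq ?_
  filter_upwards [Ioo_mem_nhds h0 h1] with w hw
  rw [psiB, Int.floor_eq_zero_iff.mpr ⟨hw.1.le, hw.2⟩, Int.cast_zero, sub_zero, id]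

lemma psiPartial_add_intCast (H : ℕ) (u : ℝ) (k : ℤ) : psiPartial H (u + k) = psiPartial H u := by
  refine congrArg Neg.neg (sum_congr rfl fun h _ => ?_)
  rw [show 2 * π * h * (u + k) = 2 * π * h * u + ((h * k : ℤ) : ℝ) * (2 * π) by push_cast; ring,
    sin_add_int_mul_two_pi]

lemma psiPartial_neg (H : ℕ) (u : ℝ) : psiPartial H (-u) = -psiPartial H u := by
  simp only [psiPartial, mul_neg, sin_neg, neg_div, sum_neg_distrib]

lemma psiPartial_half (H : ℕ) : psiPartial H (1 / 2) = 0 := by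
  refine neg_eq_zero.mpr (sum_eq_zero fun h _ => ?_)
  rw [show 2 * π * h * (1 / 2) = h * π by ring, sin_nat_mul_pi, zero_div]

lemma abs_psiPartial_le (H : ℕ) {u : ℝ} (hu : 0 ≤ u) : |psiPartial H u| ≤ 2 * H * u := by
  rw [psiPartial, abs_neg]
  calc |∑ h ∈ Icc 1 H, sin (2 * π * h * u) / (π * h)|
      ≤ ∑ h ∈ Icc 1 H, |sin (2 * π * h * u) / (π * h)| := abs_sum_le_sum_abs _ _
    _ ≤ ∑ _h ∈ Icc 1 H, 2 * u := by
        refine sum_le_sum fun h hh => ?_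
        have hπh : 0 < π * h := by
          have : (1 : ℝ) ≤ h := by exact_mod_cast (mem_Icc.mp hh).1
          positivity
        rw [abs_div, abs_of_pos hπh, div_le_iff₀ hπh]
        calc |sin (2 * π * h * u)| ≤ |2 * π * h * u| := abs_sin_le_abs
          _ = 2 * u * (π * h) := by rw [abs_of_nonneg (by positivity)]; ring
    _ = 2 * H * u := by
        simp only [sum_const, Nat.card_Icc, add_tsub_cancel_right, nsmul_eq_mul]
        ring

lemma hasDerivAt_psiPartial (H : ℕ) (u : ℝ) : HasDerivAt (psiPartial H) (-cosSum H u) u := by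
  refine (HasDerivAt.fun_sum fun h hh => ?_).neg
  have hπh : π * h ≠ 0 := by
    have : (1 : ℝ) ≤ h := by exact_mod_cast (mem_Icc.mp hh).1
    positivity
  refine ((((hasDerivAt_id' u).const_mul (2 * π * h)).sin).div_const (π * h)).congr_deriv ?_
  rw [mul_one, div_eq_iff hπh]
  ring

lemma sin_mul_one_add_cosSum (H : ℕ) (t : ℝ) :
    sin (π * t) * (1 + cosSum H t) = sin ((2 * H + 1) * π * t) := by
  induction H with
  | zero => simp [cosSum]
  | succ H ih =>
    rw [cosSum, sum_Icc_succ_top (by omega), ← cosSum, ← add_assoc, mul_add, ih]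
    push_cast
    rw [show (2 * ((H : ℝ) + 1) + 1) * π * t = 2 * π * (H + 1) * t + π * t by ring,
      show (2 * (H : ℝ) + 1) * π * t = 2 * π * (H + 1) * t - π * t by ring, sin_add, sin_sub]
    ring

lemma psiB_sub_psiPartial_eq_neg_integral (H : ℕ) {v : ℝ} (hv0 : 0 < v) (hv : v ≤ 1 / 2) :
    psiB v - psiPartial H v = -∫ t in v..1 / 2, (1 + cosSum H t) := by
  have hderiv : ∀ t ∈ Set.uIcc v (1 / 2),
      HasDerivAt (fun u => psiB u - psiPartial H u) (1 + cosSum H t) t := by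
    intro t ht
    rw [Set.uIcc_of_le hv] at ht
    have := (hasDerivAt_psiB (hv0.trans_le ht.1) (by linarith [ht.2])).sub
      (hasDerivAt_psiPartial H t)
    rwa [sub_neg_eq_add] at this
  have hcont : Continuous fun t => 1 + cosSum H t := by
    unfold cosSum
    fun_prop
  have hpsiB_half : psiB (1 / 2) = 0 := by
    rw [psiB_eq_fract, Int.fract_eq_self.mpr ⟨by norm_num, by norm_num⟩, sub_self]
  rw [intervalIntegral.integral_eq_sub_of_hasDerivAt hderiv (hcont.intervalIntegrable _ _),
    psiPartial_half, hpsiB_half]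
  ring

lemma abs_integral_mul_sin_le {g g' : ℝ → ℝ} {a b A : ℝ} (hab : a ≤ b) (hA : 0 < A)
    (hg : ∀ t ∈ Set.Icc a b, HasDerivAt g (g' t) t) (hg' : IntervalIntegrable g' volume a b)
    (hg'_nonpos : ∀ t ∈ Set.Icc a b, g' t ≤ 0) (hgb : 0 ≤ g b) :
    |∫ t in a..b, g t * sin (A * t)| ≤ 2 * g a / A := by
  rw [← Set.uIcc_of_le hab] at hg hg'_nonpos
  have hv : ∀ t ∈ Set.uIcc a b, HasDerivAt (fun u => -cos (A * u) / A) (sin (A * t)) t := by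
    intro t _
    refine ((((hasDerivAt_id' t).const_mul A).cos).neg.div_const A).congr_deriv ?_
    field_simp
  have hcos : ∀ t, |-cos (A * t) / A| ≤ 1 / A := fun t => by
    rw [abs_div, abs_neg, abs_of_pos hA]
    exact div_le_div_of_nonneg_right (abs_cos_le_one _) hA.le
  have hg'A : IntervalIntegrable (fun t => -g' t / A) volume a b := hg'.neg.div_const A
  have hFTC : ∫ t in a..b, -g' t / A = (g a - g b) / A := by
    rw [intervalIntegral.integral_eq_sub_of_hasDerivAt
      (fun t ht => ((hg t ht).neg.div_const A)) hg'A, Pi.neg_apply, Pi.neg_apply]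
    ring
  have hrest : |∫ t in a..b, g' t * (-cos (A * t) / A)| ≤ (g a - g b) / A := by
    rw [← Real.norm_eq_abs, ← hFTC]
    refine intervalIntegral.norm_integral_le_of_norm_le hab (Filter.Eventually.of_forall
      fun t ht => ?_) hg'A
    have ht : t ∈ Set.uIcc a b := Set.Ioc_subset_Icc_self.trans Set.Icc_subset_uIcc ht
    rw [Real.norm_eq_abs, abs_mul, abs_of_nonpos (hg'_nonpos t ht)]
    calc -g' t * |-cos (A * t) / A| ≤ -g' t * (1 / A) :=
          mul_le_mul_of_nonneg_left (hcos t) (neg_nonneg.mpr (hg'_nonpos t ht))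
      _ = -g' t / A := by ring
  have hgab : g b ≤ g a := by
    have := hrest.trans' (abs_nonneg _)
    rwa [le_div_iff₀ hA, zero_mul, sub_nonneg] at this
  have hsin : Continuous fun t => sin (A * t) := by fun_prop
  have hend : ∀ t, 0 ≤ g t → |g t * (-cos (A * t) / A)| ≤ g t / A := fun t ht => by
    rw [abs_mul, abs_of_nonneg ht, div_eq_mul_one_div (g t)]
    exact mul_le_mul_of_nonneg_left (hcos t) ht
  rw [intervalIntegral.integral_mul_deriv_eq_deriv_mul hg hv hg' (hsin.intervalIntegrable _ _)]
  calc _ ≤ |g b * (-cos (A * b) / A)| + |g a * (-cos (A * a) / A)|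
        + |∫ t in a..b, g' t * (-cos (A * t) / A)| :=
          (abs_sub _ _).trans (add_le_add_left (abs_sub _ _) _)
    _ ≤ g b / A + g a / A + (g a - g b) / A :=
        add_le_add (add_le_add (hend b hgb) (hend a (hgb.trans hgab))) hrest
    _ = 2 * g a / A := by ring

lemma abs_psiB_sub_psiPartial_le_inv (H : ℕ) {v : ℝ} (hv0 : 0 < v) (hv : v ≤ 1 / 2) :
    |psiB v - psiPartial H v| ≤ 1 / ((2 * H + 1) * π * v) := by
  set A : ℝ := (2 * H + 1) * π
  have hA : 0 < A := by positivity
  have hsin_pos : ∀ t ∈ Set.Icc v (1 / 2), 0 < sin (π * t) := fun t ht =>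
    sin_pos_of_pos_of_lt_pi (by nlinarith [ht.1, pi_pos]) (by nlinarith [ht.2, pi_pos])
  set g : ℝ → ℝ := fun t => (sin (π * t))⁻¹
  set g' : ℝ → ℝ := fun t => -(cos (π * t) * π) / sin (π * t) ^ 2
  have hg : ∀ t ∈ Set.Icc v (1 / 2), HasDerivAt g (g' t) t := fun t ht =>
    ((((hasDerivAt_id' t).const_mul π).sin).inv (hsin_pos t ht).ne').congr_deriv (by simp [g'])
  have hg' : IntervalIntegrable g' volume v (1 / 2) := by
    refine ContinuousOn.intervalIntegrable ?_
    rw [Set.uIcc_of_le hv]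
    exact ContinuousOn.div (by fun_prop) (by fun_prop) fun t ht => (pow_pos (hsin_pos t ht) 2).ne'
  have hg'_nonpos : ∀ t ∈ Set.Icc v (1 / 2), g' t ≤ 0 := fun t ht => by
    have : 0 ≤ cos (π * t) := cos_nonneg_of_mem_Icc ⟨by nlinarith [ht.1, pi_pos],
      by nlinarith [ht.2, pi_pos]⟩
    exact div_nonpos_of_nonpos_of_nonneg (by nlinarith [pi_pos]) (sq_nonneg _)
  have hg_half : g (1 / 2) = 1 := by
    simp only [g, show π * (1 / 2) = π / 2 by ring, sin_pi_div_two, inv_one]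
  have hg_v : g v ≤ 1 / (2 * v) := by
    have : 2 * v ≤ sin (π * v) := by
      have := mul_le_sin (x := π * v) (by positivity) (by nlinarith [pi_pos])
      rwa [← mul_assoc, div_mul_cancel₀ _ pi_ne_zero] at this
    exact (inv_eq_one_div _).trans_le (one_div_le_one_div_of_le (by positivity) this)
  have hkernel : ∀ t ∈ Set.uIcc v (1 / 2), 1 + cosSum H t = g t * sin (A * t) := by
    intro t ht
    rw [Set.uIcc_of_le hv] at ht
    rw [eq_inv_mul_iff_mul_eq₀ (hsin_pos t ht).ne', sin_mul_one_add_cosSum, mul_assoc]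
  rw [psiB_sub_psiPartial_eq_neg_integral H hv0 hv, abs_neg,
    intervalIntegral.integral_congr hkernel]
  calc _ ≤ 2 * g v / A :=
        abs_integral_mul_sin_le hv hA hg hg' hg'_nonpos (hg_half.symm ▸ zero_le_one)
    _ ≤ 2 * (1 / (2 * v)) / A := by gcongr
    _ = 1 / (A * v) := by field_simp

lemma abs_psiB_sub_psiPartial_le_of_pos {H : ℕ} (hH : 1 ≤ H) {v : ℝ} (hv0 : 0 < v)
    (hv : v ≤ 1 / 2) : |psiB v - psiPartial H v| ≤ 3 * min 1 (1 / (H * v)) := by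
  have hHv : 0 < (H : ℝ) * v := mul_pos (by exact_mod_cast hH) hv0
  rcases le_or_gt ((H : ℝ) * v) 1 with hsmall | hlarge
  · rw [min_eq_left ((le_div_iff₀ hHv).mpr (by linarith))]
    have hpsiB : |psiB v| ≤ 1 / 2 := by
      rw [psiB_eq_fract, Int.fract_eq_self.mpr ⟨hv0.le, by linarith⟩, abs_le]
      constructor <;> linarith
    have := abs_psiPartial_le H hv0.le
    linarith [abs_sub (psiB v) (psiPartial H v)]
  · rw [min_eq_right ((div_le_one hHv).mpr hlarge.le)]
    refine (abs_psiB_sub_psiPartial_le_inv H hv0 hv).trans ?_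
    have hHA : (H : ℝ) * v ≤ (2 * H + 1) * π * v := by
      have : (H : ℝ) ≤ (2 * H + 1) * π := by nlinarith [pi_gt_three]
      nlinarith
    rw [mul_one_div, div_le_div_iff₀ (by positivity) hHv]
    linarith

lemma abs_psiB_sub_psiPartial_nearInt (H : ℕ) (u : ℝ) :
    |psiB u - psiPartial H u| = |psiB (nearInt u) - psiPartial H (nearInt u)| := by
  set w := u - round u
  have hu : u = w + (round u : ℤ) := by ring
  rw [hu, psiB_add_intCast, psiPartial_add_intCast, nearInt, ← hu]
  rcases le_or_gt 0 w with hw | hw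
  · rw [abs_of_nonneg hw]
  have hfract : Int.fract w ≠ 0 := by
    have hw' : -(1 / 2) ≤ w := (abs_le.mp (abs_sub_round u)).1
    have hfloor : ⌊w⌋ = -1 := Int.floor_eq_iff.mpr ⟨by push_cast; linarith, by push_cast; linarith⟩
    rw [Int.fract, hfloor]
    push_cast
    linarith
  rw [abs_of_neg hw, psiB_neg hfract, psiPartial_neg, ← neg_add', abs_neg, sub_eq_add_neg]

lemma abs_psiB_sub_psiPartial_le_kernel {H : ℕ} (hH : 1 ≤ H) (u : ℝ) :
    |psiB u - psiPartial H u| ≤ 3 * kernel H u := by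
  rw [abs_psiB_sub_psiPartial_nearInt, kernel]
  split_ifs with h
  · norm_num [h, psiB, psiPartial]
  · exact abs_psiB_sub_psiPartial_le_of_pos hH
      ((abs_nonneg _).lt_of_ne' h) (abs_sub_round u)

lemma sum_Icc_neg_erase_zero {M : Type*} [AddCommMonoid M] (g : ℤ → M) (H : ℕ) :
    ∑ h ∈ (Icc (-(H : ℤ)) H).erase 0, g h = ∑ h ∈ Icc 1 H, (g h + g (-h)) := by
  have hsplit : (Icc (-(H : ℤ)) H).erase 0 = (Icc (1 : ℤ) H).disjUnion (Icc (-(H : ℤ)) (-1))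
      (disjoint_left.mpr fun a ha hb => by simp only [mem_Icc] at ha hb; omega) := by
    ext a
    simp only [mem_erase, mem_Icc, disjUnion_eq_union, mem_union]
    omega
  rw [hsplit, sum_disjUnion, sum_add_distrib]
  congr 1
  · refine sum_nbij' Int.toNat (↑) ?_ ?_ ?_ ?_ ?_ <;> intro a ha <;>
      simp only [mem_Icc] at ha ⊢ <;> try omega
    rw [Int.toNat_of_nonneg (by omega)]
  · refine sum_nbij' (fun a => (-a).toNat) (fun n => -(n : ℤ)) ?_ ?_ ?_ ?_ ?_ <;> intro a ha <;>
      simp only [mem_Icc] at ha ⊢ <;> try omega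
    rw [Int.toNat_of_nonneg (by omega), neg_neg]

lemma eC_add_eC_neg (t : ℝ) : eC t + eC (-t) = ((2 * cos (2 * π * t) : ℝ) : ℂ) := by
  simp only [eC]
  push_cast
  rw [Complex.two_cos]
  ring_nf

lemma sum_eC_intCast_mul (H : ℕ) (u : ℝ) :
    ∑ h ∈ (Icc (-(H : ℤ)) H).erase 0, eC (h * u) = (cosSum H u : ℂ) := by
  rw [sum_Icc_neg_erase_zero, cosSum, Complex.ofReal_sum]
  refine sum_congr rfl fun h _ => ?_
  rw [Int.cast_neg, neg_mul, eC_add_eC_neg, Int.cast_natCast, ← mul_assoc]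

lemma hasDerivAt_psiPartial_div (H : ℕ) (c t : ℝ) :
    HasDerivAt (fun t => psiPartial H (t / c)) (-(cosSum H (t / c) / c)) t := by
  have := (hasDerivAt_psiPartial H (t / c)).comp t ((hasDerivAt_id' t).div_const c)
  exact this.congr_deriv (by ring)

lemma integral_sum_eC (f : ℕ → ℂ) (s : Finset ℕ) (H : ℕ) (a b : ℝ) :
    ∫ t in a..b, ∑ h ∈ (Icc (-(H : ℤ)) H).erase 0, ∑ n ∈ s, f n / n * eC (h * t / n)
      = ∑ n ∈ s, f n * ((psiPartial H (a / n) - psiPartial H (b / n) : ℝ) : ℂ) := by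
  have hintegrand : ∀ t : ℝ,
      ∑ h ∈ (Icc (-(H : ℤ)) H).erase 0, ∑ n ∈ s, f n / n * eC (h * t / n)
        = ∑ n ∈ s, f n * ((cosSum H (t / n) / n : ℝ) : ℂ) := fun t => by
    rw [sum_comm]
    refine sum_congr rfl fun n _ => ?_
    simp only [mul_div_assoc, ← mul_sum, sum_eC_intCast_mul]
    push_cast
    ring
  have hderiv : ∀ t ∈ Set.uIcc a b, HasDerivAt (fun t => -∑ n ∈ s, f n * (psiPartial H (t / n) : ℂ))
      (∑ n ∈ s, f n * ((cosSum H (t / n) / n : ℝ) : ℂ)) t := fun t _ => by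
    refine (HasDerivAt.fun_sum fun (n : ℕ) _ =>
      ((hasDerivAt_psiPartial_div H (n : ℝ) t).ofReal_comp.const_mul (f n))).neg.congr_deriv ?_
    rw [← sum_neg_distrib]
    push_cast
    ring_nf
  have hcont : Continuous fun t => ∑ n ∈ s, f n * ((cosSum H (t / n) / n : ℝ) : ℂ) := by
    unfold cosSum
    fun_prop
  simp only [hintegrand]
  rw [intervalIntegral.integral_eq_sub_of_hasDerivAt hderiv (hcont.intervalIntegrable _ _)]
  simp only [Complex.ofReal_sub, mul_sub, sum_sub_distrib]
  ring

lemma kernel_le_one (H : ℕ) (t : ℝ) : kernel H t ≤ 1 := by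
  unfold kernel
  split_ifs
  exacts [le_rfl, min_le_left _ _]

lemma sum_norm_mul_kernel_le_sSup (f : ℕ → ℂ) (s : Finset ℕ) (H : ℕ) {a b z : ℝ} (haz : a ≤ z)
    (hzb : z ≤ b) : ∑ n ∈ s, ‖f n‖ * kernel H (z / n) ≤
      sSup {S : ℝ | ∃ z : ℝ, a ≤ z ∧ z ≤ b ∧ S = ∑ n ∈ s, ‖f n‖ * kernel H (z / n)} := by
  refine le_csSup ⟨∑ n ∈ s, ‖f n‖, ?_⟩ ⟨z, haz, hzb, rfl⟩
  rintro _ ⟨w, -, -, rfl⟩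
  exact sum_le_sum fun n _ => mul_le_of_le_one_right (norm_nonneg _) (kernel_le_one H _)

lemma norm_sum_mul_psiB_sub_psiPartial_le {H : ℕ} (hH : 1 ≤ H) (f : ℕ → ℂ) (s : Finset ℕ)
    {a b : ℝ} (hab : a ≤ b) :
    ‖∑ n ∈ s, f n * (((psiB (b / n) - psiPartial H (b / n))
        - (psiB (a / n) - psiPartial H (a / n)) : ℝ) : ℂ)‖ ≤
      6 * sSup {S : ℝ | ∃ z : ℝ, a ≤ z ∧ z ≤ b ∧ S = ∑ n ∈ s, ‖f n‖ * kernel H (z / n)} := by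
  have hterm : ∀ n ∈ s, ‖f n * (((psiB (b / n) - psiPartial H (b / n))
      - (psiB (a / n) - psiPartial H (a / n)) : ℝ) : ℂ)‖
        ≤ 3 * (‖f n‖ * kernel H (b / n)) + 3 * (‖f n‖ * kernel H (a / n)) := fun n _ => by
    rw [norm_mul, Complex.norm_real, Real.norm_eq_abs]
    have := (abs_sub _ _).trans (add_le_add (abs_psiB_sub_psiPartial_le_kernel hH (b / n))
      (abs_psiB_sub_psiPartial_le_kernel hH (a / n)))
    nlinarith [norm_nonneg (f n)]
  calc _ ≤ ∑ n ∈ s, (3 * (‖f n‖ * kernel H (b / n)) + 3 * (‖f n‖ * kernel H (a / n))) :=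
        norm_sum_le_of_le s hterm
    _ = 3 * ∑ n ∈ s, ‖f n‖ * kernel H (b / n) + 3 * ∑ n ∈ s, ‖f n‖ * kernel H (a / n) := by
        rw [sum_add_distrib, mul_sum, mul_sum]
    _ ≤ 6 * _ := by
        linarith [sum_norm_mul_kernel_le_sSup f s H hab le_rfl,
          sum_norm_mul_kernel_le_sSup f s H le_rfl hab]

theorem stmt2 : ∃ C > 0, ∀ (F : ℕ → ℂ) (x y : ℝ) (N H : ℕ),
    Real.exp (Real.exp 1) < y → y ≤ x → y < (N : ℝ) → (N : ℝ) ≤ x → 1 ≤ H →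
    ‖(∑ n ∈ Finset.Ioc N (2 * N), dconv F muC n *
          ((psiB ((x + y) / n) - psiB (x / n) : ℝ) : ℂ)) -
        (-(∫ t in x..(x + y), ∑ h ∈ (Finset.Icc (-(H : ℤ)) (H : ℤ)).erase 0,
            ∑ n ∈ Finset.Ioc N (2 * N), dconv F muC n / (n : ℂ) * eC ((h : ℝ) * t / n)))‖ ≤
      C * sSup {S : ℝ | ∃ z : ℝ, x ≤ z ∧ z ≤ x + y ∧
        S = ∑ n ∈ Finset.Ioc N (2 * N), ‖dconv F muC n‖ * kernel H (z / n)} := by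
  refine ⟨6, by norm_num, fun F x y N H hy _ _ _ hH => ?_⟩
  have hxy : x ≤ x + y := le_add_of_nonneg_right ((exp_pos _).le.trans hy.le)
  rw [integral_sum_eC]
  convert norm_sum_mul_psiB_sub_psiPartial_le hH (dconv F muC) (Ioc N (2 * N)) hxy using 2
  rw [sub_neg_eq_add, ← sum_add_distrib]
  refine sum_congr rfl fun n _ => ?_
  push_cast
  ring
end

section
/- (Dirichlet hyperbola principle in short intervals.) Let x, y, T be real numbers with 1 ≤ max(y, x/y) ≤ T ≤ x. Then for any arithmetic functions f and g, ∑_{x < n ≤ x+y} (f ⋆ g)(n) = ∑_{d ≤ T} f(d)·∑_{x/d < k ≤ (x+y)/d} g(k) + ∑_{k ≤ x/T} g(k)·∑_{x/k < d ≤ (x+y)/k} f(d) + O( max_{k ≤ 2x/T} |g(k)| · ∑_{T < d ≤ T(1 + y/x)} |f(d)| ), with an absolute implied constant. -/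
/-! The convolution sum is the sum of `f d * g k` over lattice points `x < d * k ≤ x + y`.
The points with `d ≤ T` and those with `k ≤ x / T` give the two main terms, and no point is of
both kinds since `⌊T⌋₊ * ⌊x / T⌋₊ ≤ x`. A remaining point has `d > T ≥ y`, so the interval
`(x / d, (x + y) / d]` contains only its own `k`; moreover `T < d ≤ T (1 + y / x)` because
`k > x / T`, and `k ≤ (x + y) / T ≤ 2 x / T`. Hence the remainder is bounded with constant `1`. -/

open Finset

def mulIoc (a b : ℕ) : Finset (ℕ × ℕ) :=
  (Ioc a b).biUnion Nat.divisorsAntidiagonal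

theorem mem_mulIoc {a b : ℕ} {p : ℕ × ℕ} : p ∈ mulIoc a b ↔ a < p.1 * p.2 ∧ p.1 * p.2 ≤ b := by
  simp only [mulIoc, mem_biUnion, mem_Ioc, Nat.mem_divisorsAntidiagonal]
  constructor
  · rintro ⟨n, hn, rfl, -⟩
    exact hn
  · intro h
    exact ⟨_, h, rfl, (Nat.zero_lt_of_lt h.1).ne'⟩

theorem sum_Ioc_dconv (f g : ℕ → ℂ) (a b : ℕ) :
    ∑ n ∈ Ioc a b, dconv f g n = ∑ p ∈ mulIoc a b, f p.1 * g p.2 := by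
  rw [mulIoc, sum_biUnion]
  · exact sum_congr rfl fun n _ => (Nat.sum_divisorsAntidiagonal (fun d k => f d * g k)).symm
  · intro m _ n _ hmn
    refine disjoint_left.2 fun p hm hn => hmn ?_
    rw [← (Nat.mem_divisorsAntidiagonal.1 hm).1, (Nat.mem_divisorsAntidiagonal.1 hn).1]

section Fibres

variable {M : Type*} [AddCommMonoid M] (F : ℕ → ℕ → M) (a b : ℕ)

theorem sum_filter_fst_le_mulIoc (U : ℕ) :
    ∑ p ∈ (mulIoc a b).filter (·.1 ≤ U), F p.1 p.2 =
      ∑ d ∈ Icc 1 U, ∑ k ∈ Ioc (a / d) (b / d), F d k := by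
  refine sum_finset_product' _ _ _ fun p => ?_
  rw [mem_filter, mem_mulIoc, mem_Icc, mem_Ioc]
  rcases Nat.eq_zero_or_pos p.1 with h | h
  · simp [h]
  · rw [Nat.div_lt_iff_lt_mul h, Nat.le_div_iff_mul_le h, mul_comm p.2]
    omega

theorem sum_filter_snd_le_mulIoc (V : ℕ) :
    ∑ p ∈ (mulIoc a b).filter (·.2 ≤ V), F p.1 p.2 =
      ∑ k ∈ Icc 1 V, ∑ d ∈ Ioc (a / k) (b / k), F d k := by
  refine sum_finset_product_right' _ _ _ fun p => ?_
  rw [mem_filter, mem_mulIoc, mem_Icc, mem_Ioc]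
  rcases Nat.eq_zero_or_pos p.2 with h | h
  · simp [h]
  · rw [Nat.div_lt_iff_lt_mul h, Nat.le_div_iff_mul_le h]
    omega

end Fibres

theorem eq_of_mem_mulIoc_of_fst_eq {a b : ℕ} {p q : ℕ × ℕ} (hp : p ∈ mulIoc a b)
    (hq : q ∈ mulIoc a b) (h : p.1 = q.1) (hb : b ≤ a + p.1) : p = q := by
  rw [mem_mulIoc] at hp hq
  rw [← h] at hq
  refine Prod.ext h (le_antisymm ?_ ?_)
  · by_contra! hlt
    nlinarith
  · by_contra! hlt
    nlinarith

theorem sum_filter_add_sum_filter_add_sum_filter_not_and_not {ι M : Type*} [DecidableEq ι]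
    [AddCommMonoid M] (s : Finset ι) (P Q : ι → Prop) [DecidablePred P] [DecidablePred Q]
    (h : ∀ i ∈ s, P i → ¬Q i) (F : ι → M) :
    ∑ i ∈ s.filter P, F i + ∑ i ∈ s.filter Q, F i +
      ∑ i ∈ s.filter (fun i => ¬P i ∧ ¬Q i), F i = ∑ i ∈ s, F i := by
  rw [← sum_union (disjoint_filter.2 h), ← filter_or]
  simp_rw [← not_or]
  exact sum_filter_add_sum_filter_not s _ F

theorem norm_sum_mul_le_of_injOn_fst {α β R : Type*} [DecidableEq α] [SeminormedRing R]
    {f : α → R} {g : β → R} {s : Finset (α × β)} {D : Finset α} {G : ℝ}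
    (hinj : Set.InjOn Prod.fst (s : Set (α × β))) (hD : ∀ p ∈ s, p.1 ∈ D)
    (hG : ∀ p ∈ s, ‖g p.2‖ ≤ G) (hG0 : 0 ≤ G) :
    ‖∑ p ∈ s, f p.1 * g p.2‖ ≤ G * ∑ d ∈ D, ‖f d‖ :=
  calc ‖∑ p ∈ s, f p.1 * g p.2‖ ≤ ∑ p ∈ s, ‖f p.1‖ * ‖g p.2‖ :=
        (norm_sum_le _ _).trans (sum_le_sum fun p _ => norm_mul_le _ _)
    _ ≤ ∑ p ∈ s, G * ‖f p.1‖ :=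
        sum_le_sum fun p hp => (mul_comm _ _).trans_le
          (mul_le_mul_of_nonneg_right (hG p hp) (norm_nonneg _))
    _ = G * ∑ d ∈ s.image Prod.fst, ‖f d‖ := by rw [sum_image hinj, mul_sum]
    _ ≤ G * ∑ d ∈ D, ‖f d‖ :=
        mul_le_mul_of_nonneg_left
          (sum_le_sum_of_subset_of_nonneg (image_subset_iff.2 hD) fun _ _ _ => norm_nonneg _) hG0

theorem sum_Ioc_dconv_eq_hyperbola (f g : ℕ → ℂ) {a b U V : ℕ} (h : U * V ≤ a) :
    ∑ n ∈ Ioc a b, dconv f g n =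
      ∑ d ∈ Icc 1 U, f d * ∑ k ∈ Ioc (a / d) (b / d), g k +
        (∑ k ∈ Icc 1 V, g k * ∑ d ∈ Ioc (a / k) (b / k), f d +
          ∑ p ∈ (mulIoc a b).filter (fun p => ¬p.1 ≤ U ∧ ¬p.2 ≤ V), f p.1 * g p.2) := by
  simp_rw [mul_sum, mul_comm (g _)]
  rw [sum_Ioc_dconv, ← sum_filter_fst_le_mulIoc (fun d k => f d * g k),
    ← sum_filter_snd_le_mulIoc (fun d k => f d * g k), ← add_assoc,
    sum_filter_add_sum_filter_add_sum_filter_not_and_not]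
  intro p hp hU hV
  have := Nat.mul_le_mul hU hV
  exact absurd (mem_mulIoc.1 hp).1 (by omega)

theorem norm_le_sSup_norm {ι E : Type*} [Norm E] (g : ι → E) {s : Finset ι} {k : ι}
    (hk : k ∈ s) : ‖g k‖ ≤ sSup {M : ℝ | ∃ k ∈ s, M = ‖g k‖} := by
  classical
  refine le_csSup ((s.image fun k => ‖g k‖).bddAbove.mono ?_) ⟨k, hk, rfl⟩
  rintro _ ⟨k, hk, rfl⟩
  exact mem_image_of_mem _ hk

section Floor

variable {x y T : ℝ}

theorem floor_mul_floor_div_le (hx : 0 ≤ x) (hT : 0 < T) : ⌊T⌋₊ * ⌊x / T⌋₊ ≤ ⌊x⌋₊ := by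
  refine Nat.le_floor ?_
  calc ((⌊T⌋₊ * ⌊x / T⌋₊ : ℕ) : ℝ) ≤ T * (x / T) := by
        push_cast
        exact mul_le_mul (Nat.floor_le hT.le) (Nat.floor_le (by positivity)) (by positivity) hT.le
    _ = x := mul_div_cancel₀ x hT.ne'

theorem floor_add_le_floor_add_floor_add_one (hx : 0 ≤ x) (hy : 0 ≤ y) (hyT : y ≤ T) :
    ⌊x + y⌋₊ ≤ ⌊x⌋₊ + ⌊T⌋₊ + 1 := by
  have hlt : (⌊x + y⌋₊ : ℝ) < ⌊x⌋₊ + ⌊T⌋₊ + 2 := by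
    linarith [Nat.floor_le (add_nonneg hx hy), Nat.lt_floor_add_one x, Nat.lt_floor_add_one T]
  have : ⌊x + y⌋₊ < ⌊x⌋₊ + ⌊T⌋₊ + 2 := by exact_mod_cast hlt
  omega

theorem le_floor_two_mul_div_of_mul_le {d k : ℕ} (hT : 0 < T) (hyx : y ≤ x) (hd : T < d)
    (hdk : (d * k : ℝ) ≤ x + y) : k ≤ ⌊2 * x / T⌋₊ := by
  refine Nat.le_floor ((le_div_iff₀ hT).2 ?_)
  nlinarith [(Nat.cast_nonneg k : (0 : ℝ) ≤ k)]

theorem le_floor_mul_one_add_div_of_mul_le {d k : ℕ} (hx : 0 < x) (hT : 0 < T) (hk : x / T < k)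
    (hdk : (d * k : ℝ) ≤ x + y) : d ≤ ⌊T * (1 + y / x)⌋₊ := by
  rw [div_lt_iff₀ hT] at hk
  have hd : (0 : ℝ) ≤ d := Nat.cast_nonneg d
  refine Nat.le_floor ?_
  rw [show T * (1 + y / x) = T * (x + y) / x by field_simp, le_div_iff₀ hx]
  nlinarith [mul_le_mul_of_nonneg_left hk.le hd, mul_le_mul_of_nonneg_right hdk hT.le]

end Floor

theorem norm_sum_remainder_le (f g : ℕ → ℂ) {x y T : ℝ} (hT : 0 < T) (hy : 0 ≤ y)
    (hyT : y ≤ T) (hTx : T ≤ x) :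
    ‖∑ p ∈ (mulIoc ⌊x⌋₊ ⌊x + y⌋₊).filter (fun p => ¬p.1 ≤ ⌊T⌋₊ ∧ ¬p.2 ≤ ⌊x / T⌋₊),
        f p.1 * g p.2‖ ≤
      sSup {M : ℝ | ∃ k ∈ Icc 1 ⌊2 * x / T⌋₊, M = ‖g k‖} *
        ∑ d ∈ Ioc ⌊T⌋₊ ⌊T * (1 + y / x)⌋₊, ‖f d‖ := by
  have hx : 0 < x := hT.trans_le hTx
  have hb := floor_add_le_floor_add_floor_add_one hx.le hy hyT
  have hR : ∀ p ∈ (mulIoc ⌊x⌋₊ ⌊x + y⌋₊).filter (fun p => ¬p.1 ≤ ⌊T⌋₊ ∧ ¬p.2 ≤ ⌊x / T⌋₊),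
      T < p.1 ∧ x / T < p.2 ∧ (p.1 * p.2 : ℝ) ≤ x + y := by
    intro p hp
    obtain ⟨hp, hU, hV⟩ := mem_filter.1 hp
    refine ⟨(Nat.floor_lt hT.le).1 (not_le.1 hU),
      (Nat.floor_lt (by positivity)).1 (not_le.1 hV), ?_⟩
    exact_mod_cast (Nat.le_floor_iff (by positivity)).1 (mem_mulIoc.1 hp).2
  refine norm_sum_mul_le_of_injOn_fst (fun p hp q hq hpq => ?_) (fun p hp => ?_) (fun p hp => ?_)
    (Real.sSup_nonneg ?_)
  · have := (mem_filter.1 hp).2.1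
    exact eq_of_mem_mulIoc_of_fst_eq (mem_filter.1 hp).1 (mem_filter.1 hq).1 hpq (by omega)
  · exact mem_Ioc.2 ⟨not_le.1 (mem_filter.1 hp).2.1,
      le_floor_mul_one_add_div_of_mul_le hx hT (hR p hp).2.1 (hR p hp).2.2⟩
  · have := (mem_filter.1 hp).2.2
    exact norm_le_sSup_norm g (mem_Icc.2 ⟨by omega,
      le_floor_two_mul_div_of_mul_le hT (hyT.trans hTx) (hR p hp).1 (hR p hp).2.2⟩)
  · rintro _ ⟨k, -, rfl⟩
    exact norm_nonneg _

theorem stmt3 : ∃ C > 0, ∀ (f g : ℕ → ℂ) (x y T : ℝ),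
    1 ≤ max y (x / y) → max y (x / y) ≤ T → T ≤ x →
    ‖(∑ n ∈ Finset.Ioc ⌊x⌋₊ ⌊x + y⌋₊, dconv f g n) -
        (∑ d ∈ Finset.Icc 1 ⌊T⌋₊, f d * ∑ k ∈ Finset.Ioc ⌊x / d⌋₊ ⌊(x + y) / d⌋₊, g k) -
        (∑ k ∈ Finset.Icc 1 ⌊x / T⌋₊, g k * ∑ d ∈ Finset.Ioc ⌊x / k⌋₊ ⌊(x + y) / k⌋₊, f d)‖ ≤
      C * sSup {M : ℝ | ∃ k ∈ Finset.Icc 1 ⌊2 * x / T⌋₊, M = ‖g k‖} *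
        ∑ d ∈ Finset.Ioc ⌊T⌋₊ ⌊T * (1 + y / x)⌋₊, ‖f d‖ := by
  refine ⟨1, one_pos, fun f g x y T h1 h2 h3 => ?_⟩
  have hyT : y ≤ T := (le_max_left _ _).trans h2
  have hT : 0 < T := one_pos.trans_le (h1.trans h2)
  have hx : 0 < x := hT.trans_le h3
  have hy : 0 ≤ y := by
    by_contra! hy
    linarith [max_le hy.le (div_nonpos_of_nonneg_of_nonpos hx.le hy.le)]
  simp_rw [Nat.floor_div_natCast]
  rw [sum_Ioc_dconv_eq_hyperbola f g (floor_mul_floor_div_le hx.le hT), add_sub_cancel_left,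
    add_sub_cancel_left, one_mul]
  exact norm_sum_remainder_le f g hT hy hyT h3
end

section
/- For all integers r ≥ 1, n ≥ 1 and N ≥ 1, ∑_{d | n, N < d ≤ 2N} τ_r(d) ≤ (log 2eN)^{r−1} · Δ_{r+1}(n). -/
/-!
Write a factorisation `d = l₁ ⋯ l_r` of a divisor `d ∈ (N, 2N]` of `n` and replace `l_r` by the
cofactor `n / d`: the new `r`-tuple still has product dividing `n`, and it determines the old one.
Its first `r - 1` entries lie in `[1, 2N]`, hence each in one of the `⌊log 2N⌋ + 1 ≤ log 2eN`
ranges `[e^j, e^(j+1))`, and its last entry lies in `[n/2N, n/N) ⊆ [n/2N, e·n/2N)`. The integers of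
a range `[y, e·y)` fit into a single interval `(e^u, e^(u+1)]`, so each of the
`(⌊log 2N⌋ + 1)^(r-1)` classes of tuples is counted by one `hooleyCount`, i.e. by at most
`Δ_{r+1}(n)`.
-/

open Finset

/-- The `m`-th Dirichlet–Piltz divisor function: the number of ways of writing `n`
as an ordered product of `m` positive integers. -/
noncomputable def tauP (m n : ℕ) : ℕ :=
  Nat.card {l : Fin m → ℕ // ∏ i, l i = n}

/-- The number of `(r−1)`-tuples `(d_1, …, d_{r−1})` with `d_1 ⋯ d_{r−1} ∣ n` and
`e^{u_i} < d_i ≤ e^{u_i + 1}` for each `i`. -/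
noncomputable def hooleyCount (r : ℕ) (u : Fin (r - 1) → ℝ) (n : ℕ) : ℕ :=
  Nat.card {d : Fin (r - 1) → ℕ // (∏ i, d i) ∣ n ∧
    ∀ i, Real.exp (u i) < (d i : ℝ) ∧ (d i : ℝ) ≤ Real.exp (u i + 1)}

/-- Hooley's divisor function `Δ_r(n)`. -/
noncomputable def hooleyDelta (r : ℕ) (n : ℕ) : ℕ :=
  sSup {k : ℕ | ∃ u : Fin (r - 1) → ℝ, k = hooleyCount r u n}

open Real

lemma tauP_eq_card_finMulAntidiag (m : ℕ) {d : ℕ} (hd : d ≠ 0) :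
    tauP m d = #(Nat.finMulAntidiag m d) := by
  rw [tauP, ← Nat.card_eq_finsetCard]
  exact Nat.card_congr <| Equiv.subtypeEquivRight fun l => by simp [hd]

lemma sum_tauP_eq_card_biUnion (m : ℕ) {F : Finset ℕ} (hF : 0 ∉ F) :
    ∑ d ∈ F, tauP m d = #(F.biUnion (Nat.finMulAntidiag m)) := by
  rw [card_biUnion]
  · exact sum_congr rfl fun d hd => tauP_eq_card_finMulAntidiag m (ne_of_mem_of_not_mem hd hF)
  · intro d _ d' _ hne
    refine disjoint_left.2 fun l hl hl' => hne ?_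
    rw [← Nat.prod_eq_of_mem_finMulAntidiag hl, ← Nat.prod_eq_of_mem_finMulAntidiag hl']

open Classical in
noncomputable def hooleyBox (m : ℕ) (u : Fin m → ℝ) (n : ℕ) : Finset (Fin m → ℕ) :=
  {d ∈ Fintype.piFinset fun _ => n.divisors |
    (∏ i, d i) ∣ n ∧ ∀ i, exp (u i) < (d i : ℝ) ∧ (d i : ℝ) ≤ exp (u i + 1)}

section HooleyBox

variable {m n : ℕ} {u : Fin m → ℝ}

lemma mem_hooleyBox (hn : n ≠ 0) {d : Fin m → ℕ} :
    d ∈ hooleyBox m u n ↔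
      (∏ i, d i) ∣ n ∧ ∀ i, exp (u i) < (d i : ℝ) ∧ (d i : ℝ) ≤ exp (u i + 1) := by
  simp only [hooleyBox, mem_filter, Fintype.mem_piFinset, Nat.mem_divisors, and_iff_right_iff_imp]
  exact fun h i => ⟨(dvd_prod_of_mem d (mem_univ i)).trans h.1, hn⟩

lemma hooleyCount_eq_card_hooleyBox (hn : n ≠ 0) :
    hooleyCount (m + 1) u n = #(hooleyBox m u n) := by
  rw [hooleyCount, ← Nat.card_eq_finsetCard]
  exact Nat.card_congr <| Equiv.subtypeEquivRight fun d => (mem_hooleyBox hn).symm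

lemma card_hooleyBox_le_hooleyDelta (hn : n ≠ 0) :
    #(hooleyBox m u n) ≤ hooleyDelta (m + 1) n := by
  rw [← hooleyCount_eq_card_hooleyBox hn]
  refine le_csSup ⟨#(Fintype.piFinset fun _ : Fin m => n.divisors), ?_⟩ ⟨u, rfl⟩
  rintro k ⟨v, rfl⟩
  rw [hooleyCount_eq_card_hooleyBox hn]
  exact card_filter_le _ _

lemma card_le_card_mul_hooleyDelta {ι : Type*} (hn : n ≠ 0) {S : Finset (Fin m → ℕ)}
    {C : Finset ι} (u : ι → Fin m → ℝ) (hS : ∀ t ∈ S, ∃ c ∈ C, t ∈ hooleyBox m (u c) n) :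
    #S ≤ #C * hooleyDelta (m + 1) n :=
  calc #S ≤ #(C.biUnion fun c => hooleyBox m (u c) n) :=
        card_le_card fun t ht => mem_biUnion.2 (hS t ht)
    _ ≤ ∑ c ∈ C, #(hooleyBox m (u c) n) := card_biUnion_le
    _ ≤ #C * hooleyDelta (m + 1) n := by
        simpa using sum_le_card_nsmul C _ _ fun c _ => card_hooleyBox_le_hooleyDelta hn

end HooleyBox

/-- `M = ⌈e·y⌉₊ - 1` is the largest integer below `e·y`, and the window is `(M/e, M]`. -/
noncomputable def hooleyWindow (y : ℝ) : ℝ := log (⌈exp 1 * y⌉₊ - 1 : ℕ) - 1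

lemma exp_hooleyWindow_lt_and_le {y : ℝ} {m : ℕ} (hy : y ≤ m) (hm : (m : ℝ) < exp 1 * y) :
    exp (hooleyWindow y) < m ∧ (m : ℝ) ≤ exp (hooleyWindow y + 1) := by
  set M := ⌈exp 1 * y⌉₊ - 1
  have hm0 : m ≠ 0 := by
    rintro rfl
    have hy0 : 0 < y := pos_of_mul_pos_right (by simpa using hm) (exp_pos 1).le
    push_cast at hy
    linarith
  have hmM : m ≤ M := by have := Nat.lt_ceil.2 hm; omega
  have hM : (0 : ℝ) < M := by norm_cast; omega
  have hMy : (M : ℝ) < exp 1 * y := by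
    have := Nat.ceil_lt_add_one (hm.le.trans' (Nat.cast_nonneg m))
    have h1 : 1 ≤ ⌈exp 1 * y⌉₊ := by omega
    rw [Nat.cast_sub h1]; push_cast; linarith
  rw [hooleyWindow, sub_add_cancel, exp_log hM, exp_sub, exp_log hM, div_lt_iff₀ (exp_pos 1)]
  exact ⟨by nlinarith [exp_pos 1], by exact_mod_cast hmM⟩

lemma exp_floor_log_le_and_lt {x : ℝ} (hx : 1 ≤ x) :
    exp ⌊log x⌋₊ ≤ x ∧ x < exp 1 * exp ⌊log x⌋₊ := by
  have hx0 : 0 < x := by linarith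
  rw [← exp_add, ← exp_log hx0, exp_le_exp, exp_lt_exp, log_exp, add_comm]
  exact ⟨Nat.floor_le (log_nonneg hx), Nat.lt_floor_add_one _⟩

lemma floor_log_add_one_le {x : ℝ} (hx : 1 ≤ x) : (⌊log x⌋₊ : ℝ) + 1 ≤ log (exp 1 * x) := by
  rw [log_mul (exp_pos 1).ne' (by positivity), log_exp, add_comm]
  exact add_le_add_right (Nat.floor_le (log_nonneg hx)) 1

def cofactorTuple {m : ℕ} (n : ℕ) (l : Fin (m + 1) → ℕ) : Fin (m + 1) → ℕ :=
  Fin.snoc (Fin.init l) (n / ∏ i, l i)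

section CofactorTuple

variable {m n : ℕ}

lemma prod_cofactorTuple_mul_last (l : Fin (m + 1) → ℕ) :
    (∏ i, cofactorTuple n l i) * l (Fin.last m) = (∏ i, l i) * (n / ∏ i, l i) := by
  simp only [cofactorTuple, Fin.prod_univ_castSucc, Fin.snoc_castSucc, Fin.snoc_last, Fin.init]
  ring

lemma prod_cofactorTuple_dvd {l : Fin (m + 1) → ℕ} (hl : (∏ i, l i) ∣ n) :
    (∏ i, cofactorTuple n l i) ∣ n :=
  Dvd.intro _ <| (prod_cofactorTuple_mul_last l).trans (Nat.mul_div_cancel' hl)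

lemma injOn_cofactorTuple (hn : n ≠ 0) :
    Set.InjOn (cofactorTuple n) {l : Fin (m + 1) → ℕ | (∏ i, l i) ∣ n} := by
  intro l hl l' hl' h
  have hinit : Fin.init l = Fin.init l' := by
    simpa [cofactorTuple] using congrArg Fin.init h
  have hprod : ∏ i, l i = ∏ i, l' i := by
    have hdiv : n / ∏ i, l i = n / ∏ i, l' i := by
      simpa [cofactorTuple] using congrFun h (Fin.last m)
    rw [← Nat.div_div_self hl hn, ← Nat.div_div_self hl' hn, hdiv]
  have hlast : l (Fin.last m) = l' (Fin.last m) := by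
    have hpos : 0 < ∏ i, cofactorTuple n l i :=
      Nat.pos_of_dvd_of_pos (prod_cofactorTuple_dvd hl) (Nat.pos_of_ne_zero hn)
    refine Nat.eq_of_mul_eq_mul_left hpos ?_
    rw [prod_cofactorTuple_mul_last, h, prod_cofactorTuple_mul_last, hprod]
  rw [← Fin.snoc_init_self l, ← Fin.snoc_init_self l', hinit, hlast]

end CofactorTuple

lemma div_le_cast_div_and_lt {n N d : ℕ} (hn : n ≠ 0) (hdn : d ∣ n) (hNd : N < d)
    (hd : d ≤ 2 * N) :
    (n : ℝ) / (2 * N) ≤ ((n / d : ℕ) : ℝ) ∧ ((n / d : ℕ) : ℝ) < exp 1 * (n / (2 * N)) := by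
  have hN : (0 : ℝ) < N := by norm_cast; omega
  have hn : (0 : ℝ) < n := by norm_cast; omega
  have hNd : (N : ℝ) < d := by exact_mod_cast hNd
  have hd : (d : ℝ) ≤ 2 * N := by exact_mod_cast hd
  rw [Nat.cast_div hdn (by linarith)]
  refine ⟨div_le_div_of_nonneg_left hn.le (by linarith) hd, ?_⟩
  calc (n : ℝ) / d < n / N := div_lt_div_of_pos_left hn hN hNd
    _ = 2 * (n / (2 * N)) := by field_simp
    _ < exp 1 * (n / (2 * N)) := by
        gcongr
        linarith [exp_one_gt_d9]

lemma exists_cofactorTuple_mem_hooleyBox {r n N d : ℕ} (hn : n ≠ 0) (hdn : d ∣ n)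
    (hNd : N < d) (hd : d ≤ 2 * N) {l : Fin (r + 1) → ℕ}
    (hl : l ∈ Nat.finMulAntidiag (r + 1) d) :
    ∃ c : Fin r → Fin (⌊log (2 * N)⌋₊ + 1), cofactorTuple n l ∈
      hooleyBox (r + 1) (Fin.snoc (fun i => hooleyWindow (exp (c i)))
        (hooleyWindow (n / (2 * N)))) n := by
  have hprod := Nat.prod_eq_of_mem_finMulAntidiag hl
  have hl_mem : ∀ i, (1 : ℝ) ≤ l i ∧ (l i : ℝ) ≤ 2 * N := fun i => by
    have h1 := Nat.ne_zero_of_mem_finMulAntidiag hl i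
    have h2 := Nat.le_of_dvd (by omega) (Nat.dvd_of_mem_finMulAntidiag hl i)
    constructor <;> norm_cast <;> omega
  refine ⟨fun i => ⟨⌊log (l i.castSucc)⌋₊, Nat.lt_succ_of_le <| Nat.floor_le_floor <|
      log_le_log (by linarith [hl_mem i.castSucc]) (hl_mem i.castSucc).2⟩,
    (mem_hooleyBox hn).2 ⟨prod_cofactorTuple_dvd (hprod ▸ hdn), fun i => ?_⟩⟩
  induction i using Fin.lastCases with
  | last =>
    simp only [cofactorTuple, Fin.snoc_last, hprod]
    exact (div_le_cast_div_and_lt hn hdn hNd hd).elim exp_hooleyWindow_lt_and_le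
  | cast i =>
    simp only [cofactorTuple, Fin.snoc_castSucc, Fin.init]
    exact (exp_floor_log_le_and_lt (hl_mem _).1).elim exp_hooleyWindow_lt_and_le

lemma sum_tauP_le_mul_hooleyDelta (r n N : ℕ) (hn : n ≠ 0) :
    ∑ d ∈ n.divisors.filter (fun d => N < d ∧ d ≤ 2 * N), tauP (r + 1) d ≤
      (⌊log (2 * N)⌋₊ + 1) ^ r * hooleyDelta (r + 2) n := by
  set F := n.divisors.filter (fun d => N < d ∧ d ≤ 2 * N)
  have hF : ∀ d ∈ F, d ∣ n ∧ N < d ∧ d ≤ 2 * N := by simp [F, Nat.mem_divisors, hn]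
  have hdvd : ∀ l ∈ F.biUnion (Nat.finMulAntidiag (r + 1)), (∏ i, l i) ∣ n := by
    simp only [mem_biUnion]
    rintro l ⟨d, hd, hl⟩
    exact Nat.prod_eq_of_mem_finMulAntidiag hl ▸ (hF d hd).1
  rw [sum_tauP_eq_card_biUnion _ (by simp [F]),
    ← card_image_of_injOn ((injOn_cofactorTuple hn).mono hdvd)]
  calc _ ≤ #(univ : Finset (Fin r → Fin (⌊log (2 * N)⌋₊ + 1))) * hooleyDelta (r + 2) n := by
        refine card_le_card_mul_hooleyDelta hn
          (fun c => Fin.snoc (fun i => hooleyWindow (exp (c i))) (hooleyWindow (n / (2 * N))))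
          fun t ht => ?_
        obtain ⟨l, hl, rfl⟩ := mem_image.1 ht
        obtain ⟨d, hdF, hl⟩ := mem_biUnion.1 hl
        obtain ⟨hdn, hNd, hd⟩ := hF d hdF
        obtain ⟨c, hc⟩ := exists_cofactorTuple_mem_hooleyBox hn hdn hNd hd hl
        exact ⟨c, mem_univ c, hc⟩
    _ = (⌊log (2 * N)⌋₊ + 1) ^ r * hooleyDelta (r + 2) n := by simp

theorem stmt6 (r n N : ℕ) (hr : 1 ≤ r) (hn : 1 ≤ n) (hN : 1 ≤ N) :
    (∑ d ∈ n.divisors.filter (fun d => N < d ∧ d ≤ 2 * N), (tauP r d : ℝ)) ≤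
      Real.log (2 * Real.exp 1 * N) ^ (r - 1) * (hooleyDelta (r + 1) n : ℝ) := by
  obtain ⟨r, rfl⟩ : ∃ r', r = r' + 1 := ⟨r - 1, by omega⟩
  have hK : ((⌊log (2 * N)⌋₊ + 1 : ℕ) : ℝ) ≤ log (2 * exp 1 * N) := by
    rw [show 2 * exp 1 * N = exp 1 * (2 * N) by ring]
    exact_mod_cast floor_log_add_one_le (x := 2 * N) (by norm_cast; omega)
  calc (∑ d ∈ n.divisors.filter (fun d => N < d ∧ d ≤ 2 * N), (tauP (r + 1) d : ℝ))
      ≤ ((⌊log (2 * N)⌋₊ + 1 : ℕ) : ℝ) ^ r * (hooleyDelta (r + 2) n : ℝ) := by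
        exact_mod_cast sum_tauP_le_mul_hooleyDelta r n N (by omega)
    _ ≤ log (2 * exp 1 * N) ^ (r + 1 - 1) * (hooleyDelta (r + 1 + 1) n : ℝ) := by
        rw [Nat.add_sub_cancel]
        gcongr
end
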